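/- The elements r_α (α > 0), h_{β,n} (β > 0, n ≥ 0), p⁺_n (n ≥ 0), p⁻_n (n > 0) of the universal cover of SL(2,ℝ) all lie in SL~(2,ℝ)₊ = {h̃ : ∃φ₀, h̃·φ₀ > φ₀}, while r_α for α ≤ 0, h_{β,n} for n < 0, p⁻_0, and p±_n for n < 0 do not. -/
import Mathlib


open Real

/-- The elliptic/central element `r_α` of `SL~(2,ℝ)` acting on `ℝ = RP~(1)`:
the lift of `exp(αJ₁)` along the path `t ↦ exp(tαJ₁)` acts by `φ ↦ φ + α`. -/
noncomputable def rLift (α : ℝ) : ℝ → ℝ := fun φ => φ + α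

/-- The hyperbolic element `h_{β,0}` of `SL~(2,ℝ)` acting on `ℝ`: the lift of
`exp(βJ₂)` (which acts on `RP(1)` by `tan φ ↦ e^{2β} tan φ`) fixing the points
`kπ/2`. -/
noncomputable def hypLift (β : ℝ) : ℝ → ℝ := fun φ =>
  if Real.cos φ = 0 then φ
  else (round (φ / π)) * π
    + Real.arctan (Real.exp (2 * β) * Real.tan (φ - round (φ / π) * π))

/-- The parabolic element `p₀^±` of `SL~(2,ℝ)` acting on `ℝ` (take `ε = ±1`): the
lift of `exp(±J₃)` (which acts on `RP(1)` by `tan φ ↦ tan φ ± 1`) fixing the points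
`π/2 + kπ`. -/
noncomputable def parLift (ε : ℝ) : ℝ → ℝ := fun φ =>
  if Real.cos φ = 0 then φ
  else (round (φ / π)) * π + Real.arctan (Real.tan (φ - round (φ / π) * π) + ε)

/-- Membership in `SL~(2,ℝ)₊ = {h̃ : ∃ φ₀, h̃·φ₀ > φ₀}`. -/
def inPlus (h : ℝ → ℝ) : Prop := ∃ φ₀ : ℝ, φ₀ < h φ₀

lemma round_pi_bound (φ : ℝ) : |φ - round (φ / π) * π| ≤ π / 2 := by
  have hπ := Real.pi_pos
  have h := abs_sub_round (φ / π)
  have h2 : |φ / π - round (φ / π)| * π ≤ (1 / 2) * π :=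
    mul_le_mul_of_nonneg_right h hπ.le
  have key : φ - round (φ / π) * π = (φ / π - round (φ / π)) * π := by
    field_simp
  rw [key, abs_mul, abs_of_pos hπ]; linarith

lemma lift_le (φ x : ℝ) : (round (φ / π) : ℝ) * π + Real.arctan x ≤ φ + π := by
  have h := abs_le.mp (round_pi_bound φ)
  have h1 := Real.arctan_lt_pi_div_two x
  linarith [h.1]

lemma hyp_le (β φ : ℝ) : hypLift β φ ≤ φ + π := by
  unfold hypLift
  split
  · linarith [Real.pi_pos]
  · exact lift_le φ _

lemma par_le (ε φ : ℝ) : parLift ε φ ≤ φ + π := by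
  unfold parLift
  split
  · linarith [Real.pi_pos]
  · exact lift_le φ _

lemma neg_shift {F : ℝ → ℝ} (hF : ∀ φ, F φ ≤ φ + π) (n : ℤ) (hn : n < 0) :
    ¬ inPlus (fun φ => F φ + n * π) := by
  rintro ⟨φ, hφ⟩
  simp only at hφ
  have h1 : (n : ℝ) ≤ -1 := by exact_mod_cast (by omega : n ≤ -1)
  have h2 : (n : ℝ) * π ≤ -1 * π := mul_le_mul_of_nonneg_right h1 Real.pi_pos.le
  have := hF φ
  linarith

lemma psi_bounds (φ : ℝ) (hc : Real.cos φ ≠ 0) :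
    -(π / 2) < φ - round (φ / π) * π ∧ φ - round (φ / π) * π < π / 2 := by
  have h := abs_le.mp (round_pi_bound φ)
  constructor
  · rcases h.1.lt_or_eq with h' | h'
    · linarith
    · exfalso
      apply hc
      have hφ : φ = (round (φ / π) : ℝ) * π - π / 2 := by linarith
      rw [hφ, Real.cos_sub, Real.cos_pi_div_two, Real.sin_pi_div_two,
        Real.sin_int_mul_pi]
      ring
  · rcases h.2.lt_or_eq with h' | h'
    · exact h'
    · exfalso
      apply hc
      have hφ : φ = (round (φ / π) : ℝ) * π + π / 2 := by linarith
      rw [hφ, Real.cos_add, Real.cos_pi_div_two, Real.sin_pi_div_two,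
        Real.sin_int_mul_pi]
      ring

lemma round_pi_div_four : round ((π / 4) / π) = 0 := by
  have hπ : (π : ℝ) ≠ 0 := Real.pi_ne_zero
  have : (π / 4) / π = 1 / 4 := by field_simp
  rw [this]
  norm_num [round_eq]

/-- Among the conjugacy class representatives of `SL~(2,ℝ)` (composing with
`r_{πn}`, i.e. adding `nπ`): `r_α` (α > 0), `h_{β,n}` (β > 0, n ≥ 0), `p⁺ₙ` (n ≥ 0)
and `p⁻ₙ` (n > 0) lie in `SL~(2,ℝ)₊`, while `r_α` (α ≤ 0), `h_{β,n}` (n < 0), `p₀⁻`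
and `p^±ₙ` (n < 0) do not. -/
theorem representatives_in_plus :
    (∀ α : ℝ, 0 < α → inPlus (rLift α)) ∧
    (∀ α : ℝ, α ≤ 0 → ¬ inPlus (rLift α)) ∧
    (∀ β : ℝ, 0 < β → ∀ n : ℤ, 0 ≤ n → inPlus (fun φ => hypLift β φ + n * π)) ∧
    (∀ β : ℝ, 0 < β → ∀ n : ℤ, n < 0 → ¬ inPlus (fun φ => hypLift β φ + n * π)) ∧
    (∀ n : ℤ, 0 ≤ n → inPlus (fun φ => parLift 1 φ + n * π)) ∧
    (∀ n : ℤ, 0 < n → inPlus (fun φ => parLift (-1) φ + n * π)) ∧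
    (¬ inPlus (parLift (-1))) ∧
    (∀ n : ℤ, n < 0 → ¬ inPlus (fun φ => parLift 1 φ + n * π)) ∧
    (∀ n : ℤ, n < 0 → ¬ inPlus (fun φ => parLift (-1) φ + n * π)) := by
  refine ⟨?_, ?_, ?_, ?_, ?_, ?_, ?_, ?_, ?_⟩
  · -- r_α, α > 0
    intro α hα
    exact ⟨0, by simpa [rLift] using hα⟩
  · -- r_α, α ≤ 0
    rintro α hα ⟨φ, hφ⟩
    simp only [rLift] at hφ
    linarith
  · -- h_{β,n}, β > 0, n ≥ 0
    intro β hβ n hn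
    refine ⟨π / 4, ?_⟩
    have hc : Real.cos (π / 4) ≠ 0 := by
      rw [Real.cos_pi_div_four]; positivity
    have hval : hypLift β (π / 4) = Real.arctan (Real.exp (2 * β)) := by
      simp [hypLift, hc, round_pi_div_four, Real.tan_pi_div_four]
    have h1 : π / 4 < Real.arctan (Real.exp (2 * β)) := by
      rw [← Real.arctan_one]
      refine Real.arctan_strictMono ?_
      have := Real.add_one_le_exp (2 * β)
      linarith
    have h2 : (0 : ℝ) ≤ (n : ℝ) * π := by
      have : (0 : ℝ) ≤ (n : ℝ) := by exact_mod_cast hn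
      positivity
    simp only [hval]
    linarith
  · -- h_{β,n}, n < 0
    intro β hβ n hn
    exact neg_shift (hyp_le β) n hn
  · -- p⁺ₙ, n ≥ 0
    intro n hn
    refine ⟨0, ?_⟩
    have hval : parLift 1 0 = π / 4 := by
      simp [parLift, Real.arctan_one]
    have h2 : (0 : ℝ) ≤ (n : ℝ) * π := by
      have : (0 : ℝ) ≤ (n : ℝ) := by exact_mod_cast hn
      positivity
    simp only [hval]
    linarith [Real.pi_pos]
  · -- p⁻ₙ, n > 0
    intro n hn
    refine ⟨π / 2, ?_⟩
    have hval : parLift (-1) (π / 2) = π / 2 := by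
      simp [parLift, Real.cos_pi_div_two]
    have h2 : π ≤ (n : ℝ) * π := by
      have : (1 : ℝ) ≤ (n : ℝ) := by exact_mod_cast hn
      nlinarith [Real.pi_pos]
    simp only [hval]
    linarith [Real.pi_pos]
  · -- p₀⁻ not in
    rintro ⟨φ, hφ⟩
    simp only [parLift] at hφ
    by_cases hc : Real.cos φ = 0
    · rw [if_pos hc] at hφ; exact lt_irrefl _ hφ
    · rw [if_neg hc] at hφ
      obtain ⟨hb1, hb2⟩ := psi_bounds φ hc
      have h1 : Real.arctan (Real.tan (φ - round (φ / π) * π) + (-1)) <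
          Real.arctan (Real.tan (φ - round (φ / π) * π)) :=
        Real.arctan_strictMono (by linarith)
      have h2 : Real.arctan (Real.tan (φ - round (φ / π) * π)) =
          φ - round (φ / π) * π := Real.arctan_tan hb1 hb2
      rw [h2] at h1
      linarith
  · -- p⁺ₙ, n < 0
    intro n hn
    exact neg_shift (par_le 1) n hn
  · -- p⁻ₙ, n < 0
    intro n hn
    exact neg_shift (par_le (-1)) n hn
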